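/- For a path p = e₁e₂⋯e_n in Γ, letting X_p be the set of paths e₁⋯e_{k-1}f over 1 ≤ k ≤ n and arrows f ≠ e_k with s(f) = s(e_k), one has in L_k(Γ): s(p) − p p* = Σ_{q ∈ X_p} q q*, provided every vertex s(e_k) satisfies (CK2) (i.e., is a non-sink with finitely many outgoing arrows). -/
import Mathlib


/-! Preamble: digraphs, paths, and Leavitt path algebras over a commutative ring. -/

structure DGraph : Type 1 where
  V : Type
  E : Type
  s : E → V
  t : E → V

namespace DGraph

/-- Generators of the Leavitt path algebra: vertices, arrows, ghost (dual) arrows. -/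
inductive Gen (Γ : DGraph) : Type
  | vert : Γ.V → Gen Γ
  | edge : Γ.E → Gen Γ
  | ghost : Γ.E → Gen Γ

variable (Γ : DGraph)

def IsSink (v : Γ.V) : Prop := ∀ e : Γ.E, Γ.s e ≠ v

def RowFinite : Prop := ∀ v : Γ.V, {e : Γ.E | Γ.s e = v}.Finite

/-- `IsWalkFrom v l` : the list of arrows `l` forms a path starting at `v`. -/
def IsWalkFrom : Γ.V → List Γ.E → Prop
  | _, [] => True
  | v, e :: l => Γ.s e = v ∧ IsWalkFrom (Γ.t e) l

/-- Target of a walk. -/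
def walkTrg : Γ.V → List Γ.E → Γ.V
  | v, [] => v
  | _, e :: l => walkTrg (Γ.t e) l

/-- A (finite) path in `Γ`: a source vertex together with a compatible list of arrows.
A path of length 0 is a single vertex. -/
structure Path (Γ : DGraph) : Type where
  src : Γ.V
  edges : List Γ.E
  valid : Γ.IsWalkFrom src edges

variable {Γ}

def Path.trg (p : Path Γ) : Γ.V := Γ.walkTrg p.src p.edges

/-- `q` is an initial segment of `p`, i.e. `p = q r`. -/
def IsInitialSegment (q p : Path Γ) : Prop := p.src = q.src ∧ q.edges <+: p.edges

/-- A cycle: a path of positive length from a vertex back to itself with pairwise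
distinct sources of its arrows. -/
def Path.IsCycle (p : Path Γ) : Prop :=
  p.edges ≠ [] ∧ p.trg = p.src ∧ (p.edges.map Γ.s).Nodup

/-- The vertex `v` is on the path `p`. -/
def Path.OnPath (p : Path Γ) (v : Γ.V) : Prop := p.src = v ∨ ∃ e ∈ p.edges, Γ.t e = v

/-- The path `p` has no exit: every arrow whose source is on `p` is an arrow of `p`. -/
def NoExit (p : Path Γ) : Prop := ∀ f : Γ.E, p.OnPath (Γ.s f) → f ∈ p.edges

variable (Γ)

/-- There is a path from `u` to `v`. -/
def Reaches (u v : Γ.V) : Prop := ∃ p : Path Γ, p.src = u ∧ p.trg = v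

/-- The cycles of `Γ` are pairwise disjoint: two cycles sharing a vertex coincide
(up to rotation, i.e. they have the same arrows). -/
def CyclesPairwiseDisjoint : Prop :=
  ∀ C D : Path Γ, C.IsCycle → D.IsCycle → (∃ v, C.OnPath v ∧ D.OnPath v) →
    C.edges.Perm D.edges

def Hereditary (H : Set Γ.V) : Prop := ∀ u v : Γ.V, u ∈ H → Γ.Reaches u v → v ∈ H

def Saturated (H : Set Γ.V) : Prop :=
  ∀ v : Γ.V, ¬ Γ.IsSink v → {e : Γ.E | Γ.s e = v}.Finite →
    (∀ e : Γ.E, Γ.s e = v → Γ.t e ∈ H) → v ∈ H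

/-- The full subgraph of `Γ` on a set `W` of vertices. -/
abbrev restrict (W : Set Γ.V) : DGraph where
  V := W
  E := {e : Γ.E // Γ.s e ∈ W ∧ Γ.t e ∈ W}
  s e := ⟨Γ.s e.1, e.2.1⟩
  t e := ⟨Γ.t e.1, e.2.2⟩

/-- The defining relations of the Leavitt path algebra, as a relation on the free
algebra on the generators: (V), (E), (CK1) and (CK2) (the latter imposed at every
vertex which is not a sink and emits finitely many arrows). -/
inductive LRel (k : Type) [CommRing k] (Γ : DGraph) :
    FreeAlgebra k (Gen Γ) → FreeAlgebra k (Gen Γ) → Prop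
  | vert_idem (v : Γ.V) :
      LRel k Γ (FreeAlgebra.ι k (Gen.vert v) * FreeAlgebra.ι k (Gen.vert v))
        (FreeAlgebra.ι k (Gen.vert v))
  | vert_orth (v w : Γ.V) : v ≠ w →
      LRel k Γ (FreeAlgebra.ι k (Gen.vert v) * FreeAlgebra.ι k (Gen.vert w)) 0
  | edge_src (e : Γ.E) :
      LRel k Γ (FreeAlgebra.ι k (Gen.vert (Γ.s e)) * FreeAlgebra.ι k (Gen.edge e))
        (FreeAlgebra.ι k (Gen.edge e))
  | edge_trg (e : Γ.E) :
      LRel k Γ (FreeAlgebra.ι k (Gen.edge e) * FreeAlgebra.ι k (Gen.vert (Γ.t e)))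
        (FreeAlgebra.ι k (Gen.edge e))
  | ghost_src (e : Γ.E) :
      LRel k Γ (FreeAlgebra.ι k (Gen.vert (Γ.t e)) * FreeAlgebra.ι k (Gen.ghost e))
        (FreeAlgebra.ι k (Gen.ghost e))
  | ghost_trg (e : Γ.E) :
      LRel k Γ (FreeAlgebra.ι k (Gen.ghost e) * FreeAlgebra.ι k (Gen.vert (Γ.s e)))
        (FreeAlgebra.ι k (Gen.ghost e))
  | ck1_same (e : Γ.E) :
      LRel k Γ (FreeAlgebra.ι k (Gen.ghost e) * FreeAlgebra.ι k (Gen.edge e))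
        (FreeAlgebra.ι k (Gen.vert (Γ.t e)))
  | ck1_diff (e f : Γ.E) : e ≠ f →
      LRel k Γ (FreeAlgebra.ι k (Gen.ghost e) * FreeAlgebra.ι k (Gen.edge f)) 0
  | ck2 (v : Γ.V) (h : {e : Γ.E | Γ.s e = v}.Finite) (hns : ¬ Γ.IsSink v) :
      LRel k Γ (FreeAlgebra.ι k (Gen.vert v))
        (∑ e ∈ h.toFinset, FreeAlgebra.ι k (Gen.edge e) * FreeAlgebra.ι k (Gen.ghost e))

/-- The (unitized) Leavitt path algebra of `Γ` over `k`.  For a digraph with finitely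
many vertices, see `LVF` below where additionally `1 = Σ v` is imposed; in general the
Leavitt path algebra proper is the (non-unital) subalgebra spanned by the nonempty
words in the generators, cf. `lpa`. -/
abbrev LV (k : Type) [CommRing k] (Γ : DGraph) : Type := RingQuot (LRel k Γ)

/-- The image of a generator in the Leavitt path algebra. -/
def genL (k : Type) [CommRing k] (Γ : DGraph) (g : Gen Γ) : LV k Γ :=
  RingQuot.mkAlgHom k (LRel k Γ) (FreeAlgebra.ι k g)

/-- For `Γ` with finitely many vertices, the relations of the Leavitt path algebra
together with `1 = Σ_{v ∈ V} v`. -/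
def LRelU (k : Type) [CommRing k] (Γ : DGraph) [Fintype Γ.V] :
    FreeAlgebra k (Gen Γ) → FreeAlgebra k (Gen Γ) → Prop :=
  fun a b => LRel k Γ a b ∨
    (a = 1 ∧ b = ∑ v : Γ.V, FreeAlgebra.ι k (Gen.vert v))

/-- The Leavitt path algebra of a digraph with finitely many vertices (a unital
algebra, with `1 = Σ_{v ∈ V} v`). -/
abbrev LVF (k : Type) [CommRing k] (Γ : DGraph) [Fintype Γ.V] : Type :=
  RingQuot (LRelU k Γ)

def genF (k : Type) [CommRing k] (Γ : DGraph) [Fintype Γ.V] (g : Gen Γ) : LVF k Γ :=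
  RingQuot.mkAlgHom k (LRelU k Γ) (FreeAlgebra.ι k g)

section Words

variable {k : Type} [CommRing k] {A : Type} [Ring A]

/-- The element `v e₁ ⋯ e_n` of an algebra `A`, given an interpretation `g` of the
generators. -/
def wordElem (g : Gen Γ → A) (v : Γ.V) (l : List Γ.E) : A :=
  g (Gen.vert v) * (l.map fun e => g (Gen.edge e)).prod

/-- The element `e_n* ⋯ e₁* v`. -/
def wordStar (g : Gen Γ → A) (v : Γ.V) (l : List Γ.E) : A :=
  (l.reverse.map fun e => g (Gen.ghost e)).prod * g (Gen.vert v)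

variable {Γ}

/-- The element of the algebra corresponding to a path `p`. -/
def pElem (g : Gen Γ → A) (p : Path Γ) : A := wordElem Γ g p.src p.edges

/-- The element of the algebra corresponding to the dual path `p*`. -/
def pStar (g : Gen Γ → A) (p : Path Γ) : A := wordStar Γ g p.src p.edges

/-- `Cⁿ` for `n ∈ ℤ`, with `C⁰ := s(C)` and `C⁻ⁿ := (C*)ⁿ`. -/
def cycPow (g : Gen Γ → A) (C : Path Γ) (n : ℤ) : A :=
  if n = 0 then g (Gen.vert C.src)
  else if 0 < n then pElem g C ^ n.toNat
  else pStar g C ^ (-n).toNat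

end Words

/-- The k-submodule of the unitized algebra `LV k Γ` spanned by the nonempty words
in the generators: this is the Leavitt path algebra proper (a two-sided ideal). -/
def lpa (k : Type) [CommRing k] (Γ : DGraph) : Submodule k (LV k Γ) :=
  Submodule.span k
    {x : LV k Γ | ∃ l : List (Gen Γ), l ≠ [] ∧ x = (l.map (genL k Γ)).prod}

/-- The image of the path algebra `kΓ` in `LV k Γ`: the k-span of the paths. -/
def pathSpan (k : Type) [CommRing k] (Γ : DGraph) : Submodule k (LV k Γ) :=
  Submodule.span k (Set.range (pElem (genL k Γ)))

/-- The right ideal generated by an element `a` of a ring `A` (a submodule for the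
right action of `A`, i.e. an `Aᵐᵒᵖ`-submodule). -/
def rIdeal (A : Type) [Ring A] (a : A) : Submodule Aᵐᵒᵖ A :=
  Submodule.span Aᵐᵒᵖ {a}

/-- A right `LV k Γ`-module (i.e. left `(LV k Γ)ᵐᵒᵖ`-module) is unital if
`M = M ⬝ L(Γ)`, equivalently every element is a finite sum of elements of `M·v·L`. -/
def IsUnitalMod (k : Type) [CommRing k] (Γ : DGraph) (M : Type) [AddCommGroup M]
    [Module (LV k Γ)ᵐᵒᵖ M] : Prop :=
  ∀ m : M, m ∈ Submodule.span (LV k Γ)ᵐᵒᵖ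
    {x : M | ∃ (v : Γ.V) (y : M), x = (MulOpposite.op (genL k Γ (Gen.vert v))) • y}

/-- One-step reduction of `Γ` at a loopless vertex `v`: paths of length two through
`v` become new arrows, and `v` together with all arrows touching it is deleted. -/
abbrev reduceAt (v : Γ.V) (hl : ∀ e : Γ.E, Γ.s e = v → Γ.t e ≠ v) : DGraph where
  V := {u : Γ.V // u ≠ v}
  E := {e : Γ.E // Γ.s e ≠ v ∧ Γ.t e ≠ v} ⊕
       {fg : Γ.E × Γ.E // Γ.t fg.1 = v ∧ Γ.s fg.2 = v}
  s := fun x => match x with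
    | Sum.inl e => ⟨Γ.s e.1, e.2.1⟩
    | Sum.inr fg => ⟨Γ.s fg.1.1, fun h => hl fg.1.1 h fg.2.1⟩
  t := fun x => match x with
    | Sum.inl e => ⟨Γ.t e.1, e.2.2⟩
    | Sum.inr fg => ⟨Γ.t fg.1.2, fun h => hl fg.1.2 fg.2.2 h⟩

/-- The homogeneous component of degree `g` of `LV k Γ` with respect to a degree
assignment `d` on the generators, with values in a group `G`. -/
def gcomp (k : Type) [CommRing k] (Γ : DGraph) {G : Type} [Group G]
    (d : Gen Γ → G) (g : G) : Submodule k (LV k Γ) :=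
  Submodule.span k
    {x : LV k Γ | ∃ l : List (Gen Γ), (l.map d).prod = g ∧ x = (l.map (genL k Γ)).prod}

/-- The universal degree assignment, with values in the free group on the arrows. -/
def dUniv (Γ : DGraph) : Gen Γ → FreeGroup Γ.E
  | Gen.vert _ => 1
  | Gen.edge e => FreeGroup.of e
  | Gen.ghost e => (FreeGroup.of e)⁻¹

end DGraph

/-- Gelfand–Kirillov dimension of an `F`-algebra (value in `ℝ≥0∞`):
`limsup_n log dim(Wⁿ)/log n` for a finite-dimensional generating subspace `W`
containing `1` (the supremum is taken over all such `W`; for a finitely generated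
algebra the value does not depend on the choice). -/
noncomputable def gkDim (F A : Type) [Field F] [Ring A] [Algebra F A] : ENNReal :=
  ⨆ W : {W : Submodule F A //
      FiniteDimensional F W ∧ (1 : A) ∈ W ∧ ∀ x : A, ∃ n : ℕ, x ∈ (W : Submodule F A) ^ n},
    Filter.limsup (fun n : ℕ =>
      ENNReal.ofReal
        (Real.log (Module.finrank F ↥((W : Submodule F A) ^ n)) / Real.log n))
      Filter.atTop

/-- A module is indecomposable if it is nonzero and admits no nontrivial direct sum
decomposition. -/
def IsIndecomposableModule (R M : Type) [Ring R] [AddCommGroup M] [Module R M] : Prop :=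
  Nontrivial M ∧ ∀ A B : Submodule R M, IsCompl A B → A = ⊥ ∨ B = ⊥

namespace DGraph

variable {k : Type} [CommRing k] {Γ : DGraph}

lemma genL_rel {a b : FreeAlgebra k (Gen Γ)} (h : LRel k Γ a b) :
    RingQuot.mkAlgHom k (LRel k Γ) a = RingQuot.mkAlgHom k (LRel k Γ) b :=
  RingQuot.mkAlgHom_rel k h

lemma Lvert_idem (v : Γ.V) :
    genL k Γ (Gen.vert v) * genL k Γ (Gen.vert v) = genL k Γ (Gen.vert v) := by
  simpa [genL, map_mul] using genL_rel (k := k) (LRel.vert_idem (k := k) (Γ := Γ) v)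

lemma Ledge_src (e : Γ.E) :
    genL k Γ (Gen.vert (Γ.s e)) * genL k Γ (Gen.edge e) = genL k Γ (Gen.edge e) := by
  simpa [genL, map_mul] using genL_rel (k := k) (LRel.edge_src (k := k) (Γ := Γ) e)

lemma Ledge_trg (e : Γ.E) :
    genL k Γ (Gen.edge e) * genL k Γ (Gen.vert (Γ.t e)) = genL k Γ (Gen.edge e) := by
  simpa [genL, map_mul] using genL_rel (k := k) (LRel.edge_trg (k := k) (Γ := Γ) e)

lemma Lghost_src (e : Γ.E) :
    genL k Γ (Gen.vert (Γ.t e)) * genL k Γ (Gen.ghost e) = genL k Γ (Gen.ghost e) := by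
  simpa [genL, map_mul] using genL_rel (k := k) (LRel.ghost_src (k := k) (Γ := Γ) e)

lemma Lghost_trg (e : Γ.E) :
    genL k Γ (Gen.ghost e) * genL k Γ (Gen.vert (Γ.s e)) = genL k Γ (Gen.ghost e) := by
  simpa [genL, map_mul] using genL_rel (k := k) (LRel.ghost_trg (k := k) (Γ := Γ) e)

lemma Lck2 (v : Γ.V) (h : {e : Γ.E | Γ.s e = v}.Finite) (hns : ¬ Γ.IsSink v) :
    genL k Γ (Gen.vert v) =
      ∑ e ∈ h.toFinset, genL k Γ (Gen.edge e) * genL k Γ (Gen.ghost e) := by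
  simpa [genL, map_sum, map_mul] using genL_rel (k := k) (LRel.ck2 (k := k) v h hns)

lemma Lvert_sub [DecidableEq Γ.E] (e : Γ.E) (h : {f : Γ.E | Γ.s f = Γ.s e}.Finite) :
    genL k Γ (Gen.vert (Γ.s e)) - genL k Γ (Gen.edge e) * genL k Γ (Gen.ghost e) =
      ∑ f ∈ h.toFinset.erase e, genL k Γ (Gen.edge f) * genL k Γ (Gen.ghost f) := by
  have hns : ¬ Γ.IsSink (Γ.s e) := fun hs => hs e rfl
  have he : e ∈ h.toFinset := by simp [Set.Finite.mem_toFinset]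
  rw [Lck2 (Γ.s e) h hns, ← Finset.add_sum_erase _ _ he]
  abel

lemma wordElem_cons (v : Γ.V) (e : Γ.E) (l : List Γ.E) (hv : Γ.s e = v) :
    wordElem Γ (genL k Γ) v (e :: l) =
      genL k Γ (Gen.edge e) * wordElem Γ (genL k Γ) (Γ.t e) l := by
  unfold wordElem
  rw [List.map_cons, List.prod_cons, ← mul_assoc, ← hv, Ledge_src, ← mul_assoc, Ledge_trg]

lemma wordStar_cons (v : Γ.V) (e : Γ.E) (l : List Γ.E) (hv : Γ.s e = v) :
    wordStar Γ (genL k Γ) v (e :: l) =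
      wordStar Γ (genL k Γ) (Γ.t e) l * genL k Γ (Gen.ghost e) := by
  unfold wordStar
  rw [List.reverse_cons, List.map_append, List.prod_append]
  simp only [List.map_cons, List.map_nil, List.prod_cons, List.prod_nil, mul_one]
  rw [mul_assoc, ← hv, Lghost_trg, mul_assoc, Lghost_src]

lemma vert_sub_word_star [DecidableEq Γ.E] (hrf : Γ.RowFinite) :
    ∀ (l : List Γ.E) (v : Γ.V), Γ.IsWalkFrom v l →
    genL k Γ (Gen.vert v) - wordElem Γ (genL k Γ) v l * wordStar Γ (genL k Γ) v l =
      ∑ i : Fin l.length,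
        ∑ f ∈ ((hrf (Γ.s (l.get i))).toFinset.erase (l.get i)),
          wordElem Γ (genL k Γ) v (l.take i.1 ++ [f]) *
            wordStar Γ (genL k Γ) v (l.take i.1 ++ [f])
  | [], v, _ => by
      simp [wordElem, wordStar, Lvert_idem]
  | e :: l, v, hw => by
      obtain ⟨hv, hw'⟩ := hw
      subst hv
      have IH := vert_sub_word_star hrf l (Γ.t e) hw'
      set Ee := genL k Γ (Gen.edge e)
      set Ge := genL k Γ (Gen.ghost e)
      set W := wordElem Γ (genL k Γ) (Γ.t e) l
      set W' := wordStar Γ (genL k Γ) (Γ.t e) l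
      rw [wordElem_cons _ e l rfl, wordStar_cons _ e l rfl]
      simp only [List.length_cons]
      rw [Fin.sum_univ_succ]
      have h1 : Ee * genL k Γ (Gen.vert (Γ.t e)) * Ge = Ee * Ge := by
        rw [Ledge_trg]
      have key : genL k Γ (Gen.vert (Γ.s e)) - Ee * W * (W' * Ge) =
          (genL k Γ (Gen.vert (Γ.s e)) - Ee * Ge) +
            Ee * ((genL k Γ (Gen.vert (Γ.t e)) - W * W') * Ge) := by
        rw [sub_mul, mul_sub, mul_assoc Ee (genL k Γ (Gen.vert (Γ.t e))) Ge] at *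
        rw [h1]
        noncomm_ring
      rw [key, IH]
      congr 1
      · rw [Lvert_sub e (hrf (Γ.s e))]
        apply Finset.sum_congr
        · simp
        · intro f hf
          have hsf : Γ.s f = Γ.s e := by
            have := Finset.mem_of_mem_erase hf
            simpa [Set.Finite.mem_toFinset] using this
          simp only [Fin.val_zero, List.take_zero, List.nil_append, wordElem, wordStar,
            List.map_cons, List.map_nil, List.prod_cons, List.prod_nil, mul_one,
            List.reverse_cons, List.reverse_nil, one_mul]
          rw [← hsf, Ledge_src, Lghost_trg]
      · rw [Finset.sum_mul, Finset.mul_sum]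
        apply Finset.sum_congr rfl
        intro i _
        rw [Finset.sum_mul, Finset.mul_sum]
        apply Finset.sum_congr
        · simp
        · intro f _
          have htake : (e :: l).take (i.succ).1 ++ [f] = e :: (l.take i.1 ++ [f]) := by
            simp [List.take_succ_cons]
          simp only [htake]
          rw [wordElem_cons _ e _ rfl, wordStar_cons _ e _ rfl]
          noncomm_ring

end DGraph

open DGraph in
/-- for a path `p = e₁⋯e_n` in a row-finite digraph,
`s(p) − p p* = Σ_{q ∈ X_p} q q*` where `X_p` consists of the paths
`e₁⋯e_{k−1} f` with `f ≠ e_k`, `s(f) = s(e_k)`. -/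
theorem vert_sub_pq_star (k : Type) [CommRing k] (Γ : DGraph) [DecidableEq Γ.E]
    (hrf : Γ.RowFinite) (p : Path Γ) :
    genL k Γ (Gen.vert p.src) - pElem (genL k Γ) p * pStar (genL k Γ) p =
      ∑ i : Fin p.edges.length,
        ∑ f ∈ ((hrf (Γ.s (p.edges.get i))).toFinset.erase (p.edges.get i)),
          wordElem Γ (genL k Γ) p.src (p.edges.take i.1 ++ [f]) *
            wordStar Γ (genL k Γ) p.src (p.edges.take i.1 ++ [f]) :=
  DGraph.vert_sub_word_star hrf p.edges p.src p.valid
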